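/- If there exists a nonempty antichain Λ in (Φ⁺, ≤) with Int_C(Λ) = ∅ (no point of the open dominant chamber satisfies (v,β)=1 for all β ∈ Λ), then there exists an increasing set I ⊆ Φ⁺ such that the region R_I = {v ∈ C : (v,β) > 1 for all β ∈ I and (v,γ) < 1 for all γ ∈ Φ⁺\I} is empty. -/

import Mathlib

/-! If every region `R_I` were nonempty, pick for each `S ⊆ Λ` a point `v_S` in the region of the
increasing set generated by `S`. As `Λ` is an antichain, `(v_S, β) > 1` for `β ∈ S` and
`(v_S, β) < 1` for `β ∈ Λ \ S`. Separating by a linear functional shows that `(1, …, 1)` lies in the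
convex hull of the vectors `((v_S, β))_{β ∈ Λ}`, so the corresponding convex combination of the
`v_S`, which stays in the convex chamber `C`, lies in `Int_C(Λ)`. -/

open RealInnerProductSpace

variable {V : Type*} [NormedAddCommGroup V] [InnerProductSpace ℝ V]

/-- The root order: `β ≤ γ` iff `γ - β` is a nonnegative real combination of simple roots. -/
def rle {n : ℕ} (α : Fin n → V) (β γ : V) : Prop :=
  ∃ c : Fin n → ℝ, (∀ i, 0 ≤ c i) ∧ γ - β = ∑ i, c i • α i

/-- The open dominant chamber. -/
def chamber {n : ℕ} (α : Fin n → V) : Set V :=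
  {v | ∀ i, 0 < ⟪v, α i⟫}

/-- Antichain in the root order: pairwise incomparable. -/
def RootAntichain {n : ℕ} (α : Fin n → V) (Λ : Set V) : Prop :=
  ∀ β ∈ Λ, ∀ γ ∈ Λ, (rle α β γ ∨ rle α γ β) → β = γ

/-- Increasing set (dual order ideal) in the positive root poset. -/
def IncreasingIn {n : ℕ} (α : Fin n → V) (Φpos I : Set V) : Prop :=
  ∀ β ∈ I, ∀ γ ∈ Φpos, rle α β γ → γ ∈ I

/-- Minimal elements of a set in the root order. -/
def rminimals {n : ℕ} (α : Fin n → V) (I : Set V) : Set V :=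
  {β ∈ I | ∀ γ ∈ I, rle α γ β → γ = β}

/-- Maximal elements of a set in the root order. -/
def rmaximals {n : ℕ} (α : Fin n → V) (S : Set V) : Set V :=
  {β ∈ S | ∀ γ ∈ S, rle α β γ → γ = β}

/-- The region `R_I` determined by an increasing set `I`. -/
def regionOf {n : ℕ} (α : Fin n → V) (Φpos I : Set V) : Set V :=
  {v ∈ chamber α | (∀ β ∈ I, 1 < ⟪v, β⟫) ∧ ∀ γ ∈ Φpos \ I, ⟪v, γ⟫ < 1}

/-- The union of the hyperplanes of the Catalan arrangement. -/
def catHyperplanes (Φpos : Set V) : Set V :=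
  ⋃ β ∈ Φpos, {v : V | ⟪v, β⟫ = -1 ∨ ⟪v, β⟫ = 0 ∨ ⟪v, β⟫ = 1}

theorem mem_convexHull_range_of_le_of_ge {ι : Type*} [Fintype ι] (c : ι → ℝ)
    (x : Set ι → ι → ℝ) (hin : ∀ S, ∀ i ∈ S, c i ≤ x S i) (hout : ∀ S, ∀ i ∉ S, x S i ≤ c i) :
    c ∈ convexHull ℝ (Set.range x) := by
  classical
  by_contra hc
  obtain ⟨f, u, hfu, huf⟩ := geometric_hahn_banach_closed_point (convex_convexHull ℝ _)
    ((Set.finite_range x).isCompact_convexHull (𝕜 := ℝ)).isClosed hc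
  set e : ι → ℝ := fun i => f fun j => if i = j then 1 else 0
  have hf : ∀ y, f y = ∑ i, y i • e i := f.toLinearMap.pi_apply_eq_sum_univ
  -- `f` would be smaller at `c` than at `x S`, for `S` the coordinates where `f` is increasing
  set S : Set ι := {i | 0 < e i}
  have hcS : f c ≤ f (x S) := by
    rw [hf, hf]
    refine Finset.sum_le_sum fun i _ => ?_
    by_cases hi : i ∈ S
    · exact smul_le_smul_of_nonneg_right (hin S i hi) hi.le
    · exact mul_le_mul_of_nonpos_right (hout S i hi) (not_lt.mp hi)
  linarith [hfu _ (subset_convexHull ℝ _ ⟨S, rfl⟩)]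

theorem exists_mem_convexHull_inner_eq_one {ι : Type*} [Finite ι] (β : ι → V) (v : Set ι → V)
    (hin : ∀ S, ∀ i ∈ S, 1 ≤ ⟪v S, β i⟫) (hout : ∀ S, ∀ i ∉ S, ⟪v S, β i⟫ ≤ 1) :
    ∃ w ∈ convexHull ℝ (Set.range v), ∀ i, ⟪w, β i⟫ = 1 := by
  have := Fintype.ofFinite ι
  let T : V →ₗ[ℝ] ι → ℝ := LinearMap.pi fun i => (innerₗ V).flip (β i)
  have hone := mem_convexHull_range_of_le_of_ge (fun _ => 1) (T ∘ v) hin hout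
  rw [Set.range_comp, ← T.image_convexHull] at hone
  obtain ⟨w, hw, hTw⟩ := hone
  exact ⟨w, hw, congrFun hTw⟩

theorem convex_chamber {n : ℕ} (α : Fin n → V) : Convex ℝ (chamber α) := by
  simpa only [chamber, Set.ofPred_forall] using convex_iInter fun i => convex_halfSpace_gt
    ⟨fun x y => inner_add_left x y (α i), fun r x => real_inner_smul_left x (α i) r⟩ 0

theorem rle_refl {n : ℕ} (α : Fin n → V) (β : V) : rle α β β :=
  ⟨0, fun _ => le_rfl, by simp⟩

theorem rle_trans {n : ℕ} {α : Fin n → V} {β γ δ : V} :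
    rle α β γ → rle α γ δ → rle α β δ := by
  rintro ⟨p, hp, hpe⟩ ⟨q, hq, hqe⟩
  refine ⟨q + p, fun i => add_nonneg (hq i) (hp i), ?_⟩
  rw [← sub_add_sub_cancel δ γ β, hqe, hpe, ← Finset.sum_add_distrib]
  simp only [Pi.add_apply, add_smul]

def upperClosureIn {n : ℕ} (α : Fin n → V) (Φpos S : Set V) : Set V :=
  {γ ∈ Φpos | ∃ β ∈ S, rle α β γ}

section upperClosureIn

variable {n : ℕ} {α : Fin n → V} {Φpos S Λ : Set V}

theorem upperClosureIn_subset : upperClosureIn α Φpos S ⊆ Φpos := fun _ hγ => hγ.1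

theorem increasingIn_upperClosureIn : IncreasingIn α Φpos (upperClosureIn α Φpos S) :=
  fun _ ⟨_, β, hβS, hβγ⟩ _ hδ hγδ => ⟨hδ, β, hβS, rle_trans hβγ hγδ⟩

theorem RootAntichain.mem_upperClosureIn_iff (hA : RootAntichain α Λ) (hΛ : Λ ⊆ Φpos)
    (hS : S ⊆ Λ) {β : V} (hβ : β ∈ Λ) : β ∈ upperClosureIn α Φpos S ↔ β ∈ S := by
  refine ⟨fun ⟨_, γ, hγS, hγβ⟩ => ?_, fun hβS => ⟨hΛ hβ, β, hβS, rle_refl α β⟩⟩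
  rwa [← hA γ (hS hγS) β hβ (Or.inl hγβ)]

end upperClosureIn

theorem stmt17_general
    {n : ℕ} (α : Fin n → V) (Φpos : Finset V)
    (Λ : Set V) (hΛpos : Λ ⊆ (↑Φpos : Set V)) (hA : RootAntichain α Λ)
    (hempty : ¬ ∃ v ∈ chamber α, ∀ β ∈ Λ, ⟪v, β⟫ = 1) :
    ∃ I ⊆ (↑Φpos : Set V), IncreasingIn α ↑Φpos I ∧ regionOf α ↑Φpos I = ∅ := by
  by_contra! hcon
  have : Finite Λ := (Φpos.finite_toSet.subset hΛpos).to_subtype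
  let I : Set Λ → Set V := fun S => upperClosureIn α Φpos (Subtype.val '' S)
  choose v hv using fun S => hcon (I S) upperClosureIn_subset increasingIn_upperClosureIn
  have hI : ∀ S (β : Λ), (β : V) ∈ I S ↔ β ∈ S := fun S β => by
    rw [hA.mem_upperClosureIn_iff hΛpos (by simp) β.2, Subtype.val_injective.mem_set_image]
  obtain ⟨w, hw, hw1⟩ := exists_mem_convexHull_inner_eq_one (fun β : Λ => (β : V)) v
    (fun S β hβ => ((hv S).2.1 β ((hI S β).2 hβ)).le)
    (fun S β hβ => ((hv S).2.2 β ⟨hΛpos β.2, mt (hI S β).1 hβ⟩).le)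
  have hwC : w ∈ chamber α :=
    convexHull_min (Set.range_subset_iff.2 fun S => (hv S).1) (convex_chamber α) hw
  exact hempty ⟨w, hwC, fun β hβ => hw1 ⟨β, hβ⟩⟩

theorem stmt17
    [FiniteDimensional ℝ V] {n : ℕ} (α : Fin n → V) (Φ Φpos : Finset V)
    (hind : LinearIndependent ℝ α)
    (hspan : Submodule.span ℝ (Set.range α) = ⊤)
    (hαΦ : ∀ i, α i ∈ Φ)
    (h0 : (0 : V) ∉ Φ)
    (hrefl : ∀ β ∈ Φ, ∀ γ ∈ Φ, γ - (2 * ⟪γ, β⟫ / ⟪β, β⟫) • β ∈ Φ)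
    (hmul : ∀ β ∈ Φ, ∀ t : ℝ, t • β ∈ Φ → t = 1 ∨ t = -1)
    (hpos : ∀ β : V, β ∈ Φpos ↔
      β ∈ Φ ∧ ∃ c : Fin n → ℝ, (∀ i, 0 ≤ c i) ∧ β = ∑ i, c i • α i)
    (hpm : ∀ β ∈ Φ, β ∈ Φpos ∨ -β ∈ Φpos)
    (Λ : Set V) (hΛpos : Λ ⊆ (↑Φpos : Set V)) (hA : RootAntichain α Λ)
    (hne : Λ.Nonempty)
    (hempty : ¬ ∃ v ∈ chamber α, ∀ β ∈ Λ, ⟪v, β⟫ = 1) :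
    ∃ I ⊆ (↑Φpos : Set V), IncreasingIn α ↑Φpos I ∧ regionOf α ↑Φpos I = ∅ :=
  stmt17_general α Φpos Λ hΛpos hA hempty
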